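/- For every fixed λ > 0: ∫ (λ/(s + λ))² dMP(γ)(s) → λ²/(1 + λ)² and ∫ s/(s + λ)² dMP(γ)(s) → 1/(1 + λ)² as γ → 0⁺. -/

import Mathlib

/-!
As `γ → 0⁺` the measure `MP γ` has no atom and lives on `[(1 - √γ)², (1 + √γ)²]`, which shrinks
to `{1}`. Its total mass is squeezed between `1 / (1 + √γ)²` and `1 / (1 - √γ)²`: bound the factor
`1 / s` of the density by its values at the endpoints and integrate the semicircle
`√((b - s)(s - a))`, of area `π (b - a)² / 8`. A family of measures whose mass tends to `1` and
which concentrates at a point `x₀` integrates every function continuous at `x₀` to its value there.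
-/

open MeasureTheory Filter


/-- The Marchenko–Pastur measure with aspect ratio `γ`: a point mass of weight
`max 0 (1 - 1/γ)` at `0` plus the absolutely continuous part with density
`s ↦ √((b - s)(s - a)) / (2πγs)` on `[a, b]`, where `a = (1 - √γ)²`, `b = (1 + √γ)²`. -/
noncomputable def MP (γ : ℝ) : Measure ℝ :=
  ENNReal.ofReal (max 0 (1 - 1 / γ)) • Measure.dirac 0 +
    volume.withDensity
      (Set.indicator (Set.Icc ((1 - Real.sqrt γ) ^ 2) ((1 + Real.sqrt γ) ^ 2))
        (fun s => ENNReal.ofReal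
          (Real.sqrt (((1 + Real.sqrt γ) ^ 2 - s) * (s - (1 - Real.sqrt γ) ^ 2)) /
            (2 * Real.pi * γ * s))))

open Topology Set Real
open scoped ENNReal

theorem tendsto_integral_of_concentrating {ι X E : Type*} [TopologicalSpace X] [MeasurableSpace X]
    [NormedAddCommGroup E] [NormedSpace ℝ E] [CompleteSpace E] {l : Filter ι}
    {μ : ι → Measure X} {x₀ : X} {f : X → E} (hconc : ∀ U ∈ 𝓝 x₀, ∀ᶠ i in l, μ i Uᶜ = 0)
    (hmass : Tendsto (fun i => μ i univ) l (𝓝 1)) (hf : ContinuousAt f x₀)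
    (hfm : ∀ i, AEStronglyMeasurable f (μ i)) :
    Tendsto (fun i => ∫ x, f x ∂μ i) l (𝓝 (f x₀)) := by
  have hmass_real : Tendsto (fun i => (μ i).real univ) l (𝓝 1) := by
    simpa [measureReal_def, Function.comp_def] using
      (ENNReal.tendsto_toReal ENNReal.one_ne_top).comp hmass
  have hdev : Tendsto (fun i => ∫ x, f x ∂μ i - (μ i).real univ • f x₀) l (𝓝 0) := by
    rw [Metric.tendsto_nhds]
    intro ε hε
    have hnear : ∀ᶠ x in 𝓝 x₀, ‖f x - f x₀‖ ≤ ε / 2 :=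
      (Metric.tendsto_nhds.1 hf (ε / 2) (half_pos hε)).mono fun x hx => by
        rw [← dist_eq_norm]; exact hx.le
    have hlt_two : ∀ᶠ i in l, μ i univ < 2 := hmass.eventually (gt_mem_nhds (by norm_num))
    filter_upwards [hconc _ hnear, hlt_two] with i hnull hlt
    have : IsFiniteMeasure (μ i) := ⟨hlt.trans ENNReal.ofNat_lt_top⟩
    have hbound : ∀ᵐ x ∂μ i, ‖f x - f x₀‖ ≤ ε / 2 := by
      simpa using measure_eq_zero_iff_ae_notMem.1 hnull
    have hint : Integrable f (μ i) := by
      refine .of_bound (hfm i) (‖f x₀‖ + ε / 2) (hbound.mono fun x hx => ?_)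
      calc ‖f x‖ ≤ ‖f x₀‖ + ‖f x - f x₀‖ := norm_le_insert' _ _
        _ ≤ ‖f x₀‖ + ε / 2 := by gcongr
    have hreal : (μ i).real univ < 2 := by
      rw [measureReal_def]; exact ENNReal.toReal_lt_of_lt_ofReal (by simpa using hlt)
    rw [dist_zero_right, ← integral_const, ← integral_sub hint (integrable_const _)]
    calc ‖∫ x, f x - f x₀ ∂μ i‖ ≤ ε / 2 * (μ i).real univ :=
          norm_integral_le_of_norm_le_const hbound
      _ < ε := by nlinarith
  simpa using (hmass_real.smul_const (f x₀)).add hdev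

theorem integral_sqrt_sub_mul_sub {a b : ℝ} (hab : a ≤ b) :
    ∫ s in a..b, √((b - s) * (s - a)) = π * (b - a) ^ 2 / 8 := by
  set r := (b - a) / 2
  set c := (a + b) / 2
  have hr : 0 ≤ r := by simp only [r]; linarith
  have hsqrt_affine :
      ∀ x, √((b - (r * x + c)) * ((r * x + c) - a)) = r * √(1 - x ^ 2) := fun x => by
    rw [show (b - (r * x + c)) * ((r * x + c) - a) = r ^ 2 * (1 - x ^ 2) by simp only [r, c]; ring,
      sqrt_mul (sq_nonneg r), sqrt_sq hr]
  rcases hr.eq_or_lt with hr0 | hr0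
  · have : b = a := by simp only [r] at hr0; linarith
    simp [this]
  have hchange := intervalIntegral.integral_comp_mul_add (fun s => √((b - s) * (s - a))) hr0.ne' c
    (a := -1) (b := 1)
  rw [show r * -1 + c = a by simp only [r, c]; ring, show r * 1 + c = b by simp only [r, c]; ring]
    at hchange
  simp only [hsqrt_affine, intervalIntegral.integral_const_mul, integral_sqrt_one_sub_sq] at hchange
  rw [eq_inv_smul_iff₀ hr0.ne', smul_eq_mul] at hchange
  rw [← hchange]
  simp only [r]
  ring

theorem lintegral_Icc_ofReal_sqrt_sub_mul_sub {a b : ℝ} (hab : a ≤ b) :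
    ∫⁻ s in Icc a b, ENNReal.ofReal (√((b - s) * (s - a))) =
      ENNReal.ofReal (π * (b - a) ^ 2 / 8) := by
  rw [← integral_sqrt_sub_mul_sub hab, intervalIntegral.integral_of_le hab,
    ← integral_Icc_eq_integral_Ioc, ofReal_integral_eq_lintegral_ofReal]
  · exact (by fun_prop : Continuous fun s : ℝ => √((b - s) * (s - a))).integrableOn_Icc
  · exact ae_of_all _ fun _ => sqrt_nonneg _

theorem lintegral_Icc_ofReal_sqrt_sub_mul_sub_div_mem_Icc {a b c : ℝ} (ha : 0 < a) (hab : a ≤ b)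
    (hc : 0 < c) :
    ∫⁻ s in Icc a b, ENNReal.ofReal (√((b - s) * (s - a)) / (c * s)) ∈
      Icc (ENNReal.ofReal (π * (b - a) ^ 2 / 8 / (c * b)))
        (ENNReal.ofReal (π * (b - a) ^ 2 / 8 / (c * a))) := by
  have hscale : ∀ t, 0 < t → ∫⁻ s in Icc a b, ENNReal.ofReal (√((b - s) * (s - a)) / (c * t)) =
      ENNReal.ofReal (π * (b - a) ^ 2 / 8 / (c * t)) := fun t ht => by
    have hct : 0 ≤ (c * t)⁻¹ := by positivity
    simp_rw [div_eq_mul_inv _ (c * t), ENNReal.ofReal_mul' hct]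
    rw [lintegral_mul_const' _ _ ENNReal.ofReal_ne_top, lintegral_Icc_ofReal_sqrt_sub_mul_sub hab]
  constructor
  · rw [← hscale b (ha.trans_le hab)]
    refine setLIntegral_mono (by fun_prop) fun s hs => ENNReal.ofReal_le_ofReal ?_
    have hs0 := ha.trans_le hs.1
    gcongr
    exact hs.2
  · rw [← hscale a ha]
    refine setLIntegral_mono (by fun_prop) fun s hs => ENNReal.ofReal_le_ofReal ?_
    gcongr
    exact hs.1

section MP

variable {γ : ℝ}

theorem MP_eq_withDensity (hγ0 : 0 < γ) (hγ1 : γ ≤ 1) :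
    MP γ = (volume.restrict (Icc ((1 - √γ) ^ 2) ((1 + √γ) ^ 2))).withDensity fun s =>
      ENNReal.ofReal (√(((1 + √γ) ^ 2 - s) * (s - (1 - √γ) ^ 2)) / (2 * π * γ * s)) := by
  have hatom : max 0 (1 - 1 / γ) = 0 :=
    max_eq_left (sub_nonpos.2 ((one_le_div hγ0).2 hγ1))
  rw [MP, hatom, ENNReal.ofReal_zero, zero_smul, zero_add, withDensity_indicator measurableSet_Icc]

theorem MP_compl_Icc (hγ0 : 0 < γ) (hγ1 : γ ≤ 1) :
    MP γ (Icc ((1 - √γ) ^ 2) ((1 + √γ) ^ 2))ᶜ = 0 := by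
  rw [MP_eq_withDensity hγ0 hγ1]
  exact withDensity_absolutelyContinuous _ _ (by simp)

theorem MP_univ_mem_Icc (hγ0 : 0 < γ) (hγ1 : γ < 1) :
    MP γ univ ∈ Icc (ENNReal.ofReal (1 / (1 + √γ) ^ 2)) (ENNReal.ofReal (1 / (1 - √γ) ^ 2)) := by
  have hsqrt : √γ < 1 := (sqrt_lt' one_pos).2 (by simpa using hγ1)
  have hwidth : ((1 + √γ) ^ 2 - (1 - √γ) ^ 2) ^ 2 = 16 * γ := by
    nlinarith [sq_sqrt hγ0.le]
  have hbounds := lintegral_Icc_ofReal_sqrt_sub_mul_sub_div_mem_Icc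
    (a := (1 - √γ) ^ 2) (b := (1 + √γ) ^ 2) (c := 2 * π * γ) (by nlinarith)
    (by nlinarith [sqrt_nonneg γ]) (by positivity)
  rw [hwidth] at hbounds
  rw [MP_eq_withDensity hγ0 hγ1.le, withDensity_apply _ MeasurableSet.univ, Measure.restrict_univ]
  convert hbounds using 3 <;> field_simp <;> ring_nf

theorem tendsto_one_sub_sqrt_sq : Tendsto (fun γ => (1 - √γ) ^ 2) (𝓝 0) (𝓝 1) := by
  simpa using (by fun_prop : Continuous fun γ => (1 - √γ) ^ 2).tendsto 0

theorem tendsto_one_add_sqrt_sq : Tendsto (fun γ => (1 + √γ) ^ 2) (𝓝 0) (𝓝 1) := by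
  simpa using (by fun_prop : Continuous fun γ => (1 + √γ) ^ 2).tendsto 0

theorem tendsto_MP_univ : Tendsto (fun γ => MP γ univ) (𝓝[>] 0) (𝓝 1) := by
  have hlim : ∀ {g : ℝ → ℝ}, Tendsto g (𝓝 0) (𝓝 1) →
      Tendsto (fun γ => ENNReal.ofReal (1 / g γ)) (𝓝[>] 0) (𝓝 1) := fun hg => by
    simpa using ENNReal.tendsto_ofReal ((hg.mono_left nhdsWithin_le_nhds).inv₀ one_ne_zero)
  refine tendsto_of_tendsto_of_tendsto_of_le_of_le' (hlim tendsto_one_add_sqrt_sq)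
    (hlim tendsto_one_sub_sqrt_sq) ?_ ?_
  all_goals filter_upwards [Ioo_mem_nhdsGT one_pos] with γ hγ
  · exact (MP_univ_mem_Icc hγ.1 hγ.2).1
  · exact (MP_univ_mem_Icc hγ.1 hγ.2).2

theorem MP_compl_eventually_eq_zero {U : Set ℝ} (hU : U ∈ 𝓝 1) :
    ∀ᶠ γ in 𝓝[>] 0, MP γ Uᶜ = 0 := by
  have hIcc := (tendsto_one_sub_sqrt_sq.Icc tendsto_one_add_sqrt_sq).eventually
    (eventually_smallSets_subset.2 hU)
  filter_upwards [nhdsWithin_le_nhds hIcc, Ioo_mem_nhdsGT one_pos] with γ hsub hγ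
  exact measure_mono_null (compl_subset_compl.2 hsub) (MP_compl_Icc hγ.1 hγ.2.le)

theorem tendsto_integral_MP {E : Type*} [NormedAddCommGroup E] [NormedSpace ℝ E]
    [CompleteSpace E] {f : ℝ → E} (hf : ContinuousAt f 1) (hfm : StronglyMeasurable f) :
    Tendsto (fun γ => ∫ s, f s ∂MP γ) (𝓝[>] 0) (𝓝 (f 1)) :=
  tendsto_integral_of_concentrating (fun _ => MP_compl_eventually_eq_zero) tendsto_MP_univ hf
    fun _ => hfm.aestronglyMeasurable

end MP

theorem stmt15 (lam : ℝ) (hlam : 0 < lam) :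
    Tendsto (fun γ => ∫ s, (lam / (s + lam)) ^ 2 ∂(MP γ))
      (nhdsWithin 0 (Set.Ioi 0)) (nhds (lam ^ 2 / (1 + lam) ^ 2)) ∧
    Tendsto (fun γ => ∫ s, s / (s + lam) ^ 2 ∂(MP γ))
      (nhdsWithin 0 (Set.Ioi 0)) (nhds (1 / (1 + lam) ^ 2)) := by
  constructor
  · rw [← div_pow]
    exact tendsto_integral_MP (by fun_prop (disch := positivity)) (by fun_prop)
  · exact tendsto_integral_MP (by fun_prop (disch := positivity)) (by fun_prop)
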